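/- Let G be a finite simple connected graph that is λ''-connected, super-λ', and edge-regular (every edge of G has edge-degree equal to ξ(G)). Then ρ'(G) ≥ min{λ''(G) − ξ(G), δ(G) − 1}, where δ(G) is the minimum degree of G. -/

import Mathlib

open SimpleGraph

variable {V : Type*}

/-- The degree of a vertex, as the cardinality of its neighbor set. -/
noncomputable def degN (G : SimpleGraph V) (v : V) : ℕ := (G.neighborSet v).ncard

/-- The minimum degree `δ(G)`. -/
noncomputable def minDeg (G : SimpleGraph V) : ℕ := sInf {k | ∃ v, degN G v = k}

/-- `d_G(X)`: the number of edges of `G` with exactly one endpoint in `X`. -/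
noncomputable def dOut (G : SimpleGraph V) (X : Set V) : ℕ :=
  {e ∈ G.edgeSet | ∃ x ∈ X, ∃ y ∈ Xᶜ, e = s(x, y)}.ncard

/-- `F` is an `h`-extra edge-cut of `G`: a set of edges of `G` whose removal disconnects `G`
and such that every connected component of `G - F` has more than `h` vertices. -/
def IsExtraEdgeCut (G : SimpleGraph V) (h : ℕ) (F : Set (Sym2 V)) : Prop :=
  F ⊆ G.edgeSet ∧ ¬(G.deleteEdges F).Connected ∧
    ∀ c : (G.deleteEdges F).ConnectedComponent, h < c.supp.ncard

/-- `G` is `λ^(h)`-connected: an `h`-extra edge-cut exists. -/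
def LambdaConn (G : SimpleGraph V) (h : ℕ) : Prop := ∃ F, IsExtraEdgeCut G h F

/-- The `h`-extra edge-connectivity `λ^(h)(G)`: the minimum cardinality of an
`h`-extra edge-cut. -/
noncomputable def lambdaH (G : SimpleGraph V) (h : ℕ) : ℕ :=
  sInf {k | ∃ F, IsExtraEdgeCut G h F ∧ F.ncard = k}

/-- `ξ_h(G)`: the minimum of `d_G(X)` over vertex sets `X` of size `h + 1` inducing a
connected subgraph. -/
noncomputable def xiH (G : SimpleGraph V) (h : ℕ) : ℕ :=
  sInf {k | ∃ X : Set V, X.ncard = h + 1 ∧ (G.induce X).Connected ∧ dOut G X = k}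

/-- `G` is super-`λ^(h)`: it is connected, `λ^(h)`-connected, `λ^(h)`-optimal
(`λ^(h)(G) = ξ_h(G)`), and every minimum `h`-extra edge-cut leaves a component with
exactly `h + 1` vertices. -/
def SuperLambda (G : SimpleGraph V) (h : ℕ) : Prop :=
  G.Connected ∧ LambdaConn G h ∧ lambdaH G h = xiH G h ∧
    ∀ F : Set (Sym2 V), IsExtraEdgeCut G h F → F.ncard = lambdaH G h →
      ∃ c : (G.deleteEdges F).ConnectedComponent, c.supp.ncard = h + 1

/-- The persistence `ρ^(h)(G)`: the largest `m` such that `G - F` is super-`λ^(h)` for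
every set `F` of at most `m` edges of `G`. -/
noncomputable def rhoH (G : SimpleGraph V) (h : ℕ) : ℕ :=
  sSup {m : ℕ | ∀ F : Set (Sym2 V), F ⊆ G.edgeSet → F.ncard ≤ m →
    SuperLambda (G.deleteEdges F) h}

/-- `ξ(G)`: the minimum edge-degree `deg x + deg y - 2` over the edges `xy` of `G`. -/
noncomputable def xiEdge (G : SimpleGraph V) : ℕ :=
  sInf {k | ∃ x y, G.Adj x y ∧ degN G x + degN G y - 2 = k}

/-- `η(G)`: the number of edges of `G` whose edge-degree equals `ξ(G)`. -/
noncomputable def eta (G : SimpleGraph V) : ℕ :=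
  {e ∈ G.edgeSet | ∃ x y, e = s(x, y) ∧ degN G x + degN G y - 2 = xiEdge G}.ncard

/-!
Let `F` be a set of edges with `1 ≤ |F| ≤ min (λ'' - ξ) (δ - 1)`. Every vertex keeps a neighbour
in `G - F`, and `G - F` is connected because `|F| < 2δ - 2 ≤ ξ = λ'`. Since `G` has at least six
vertices, `G - F` is not a star, so (like every such graph) it has a `1`-extra edge-cut of size at
most `ξ(G - F)`. Deleting an edge `uv ∈ F` shrinks the boundary of an edge `uw` of `G - F`, so
edge-regularity gives `ξ(G - F) < ξ(G)`. Hence a `1`-extra edge-cut `F'` of `G - F` with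
`|F'| ≤ ξ(G - F)` satisfies `|F ∪ F'| < λ''(G)`: the cut `F ∪ F'` of `G` must leave a component
with two vertices, whose boundary shows `ξ(G - F) ≤ |F'|`. So `G - F` is `λ'`-optimal and
super-`λ'`.
-/

def edgeBoundary (G : SimpleGraph V) (X : Set V) : Set (Sym2 V) :=
  {e ∈ G.edgeSet | ∃ x ∈ X, ∃ y ∈ Xᶜ, e = s(x, y)}

namespace SimpleGraph

variable {G : SimpleGraph V}

theorem Reachable.exists_adj_of_ne {u v : V} (h : G.Reachable u v) (hne : u ≠ v) :
    ∃ w, G.Adj u w := by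
  obtain ⟨p⟩ := h
  exact ⟨_, p.adj_snd (Walk.not_nil_of_ne hne)⟩

theorem Reachable.iff_of_forall_adj {P : V → Prop} (hP : ∀ a b, G.Adj a b → (P a ↔ P b))
    {u v : V} (h : G.Reachable u v) : P u ↔ P v := by
  obtain ⟨p⟩ := h
  induction p with
  | nil => rfl
  | cons hadj _ ih => exact (hP _ _ hadj).trans ih

theorem adj_of_connected_induce_pair {x y : V} (hne : x ≠ y)
    (h : (G.induce {x, y}).Connected) : G.Adj x y := by
  obtain ⟨⟨w, hw⟩, hxw⟩ := (h.preconnected ⟨x, by simp⟩ ⟨y, by simp⟩).exists_adj_of_ne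
    (by simpa using hne)
  rcases hw with rfl | rfl
  · exact absurd hxw (G.induce _).irrefl
  · exact hxw

end SimpleGraph

section Boundary

variable {G : SimpleGraph V} {X : Set V} {F : Set (Sym2 V)} {a b x y : V}

theorem dOut_eq_ncard_edgeBoundary (G : SimpleGraph V) (X : Set V) :
    dOut G X = (edgeBoundary G X).ncard := rfl

theorem edgeBoundary_subset_edgeSet : edgeBoundary G X ⊆ G.edgeSet := fun _ he => he.1

theorem mk_mem_edgeBoundary_iff : s(a, b) ∈ edgeBoundary G X ↔ G.Adj a b ∧ ¬(a ∈ X ↔ b ∈ X) := by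
  simp only [edgeBoundary, Set.mem_ofPred_eq, mem_edgeSet, Set.mem_compl_iff, Sym2.eq_iff]
  constructor
  · rintro ⟨h, x, hx, y, hy, ⟨rfl, rfl⟩ | ⟨rfl, rfl⟩⟩ <;> tauto
  · rintro ⟨h, hab⟩
    by_cases ha : a ∈ X
    · exact ⟨h, a, ha, b, by tauto, .inl ⟨rfl, rfl⟩⟩
    · exact ⟨h, b, by tauto, a, ha, .inr ⟨rfl, rfl⟩⟩

theorem edgeBoundary_deleteEdges (G : SimpleGraph V) (F : Set (Sym2 V)) (X : Set V) :
    edgeBoundary (G.deleteEdges F) X = edgeBoundary G X \ F := by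
  ext e
  simp only [edgeBoundary, edgeSet_deleteEdges, Set.mem_ofPred_eq, Set.mem_sdiff]
  tauto

theorem mem_iff_of_deleteEdges_edgeBoundary_adj (h : (G.deleteEdges (edgeBoundary G X)).Adj a b) :
    a ∈ X ↔ b ∈ X := by
  rw [deleteEdges_adj, mk_mem_edgeBoundary_iff] at h
  tauto

theorem edgeBoundary_supp_subset (c : (G.deleteEdges F).ConnectedComponent) :
    edgeBoundary G c.supp ⊆ F := by
  intro e he
  induction e using Sym2.ind with | _ a b =>
  rw [mk_mem_edgeBoundary_iff] at he
  by_contra hF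
  exact he.2 (c.mem_supp_congr_adj (deleteEdges_adj.2 ⟨he.1, hF⟩))

theorem dOut_deleteEdges_lt [Finite V] {e : Sym2 V} (he : e ∈ F) (hb : e ∈ edgeBoundary G X) :
    dOut (G.deleteEdges F) X < dOut G X := by
  rw [dOut_eq_ncard_edgeBoundary, dOut_eq_ncard_edgeBoundary, edgeBoundary_deleteEdges]
  exact Set.ncard_lt_ncard ⟨Set.sdiff_subset, fun h => (h hb).2 he⟩

theorem degN_eq_ncard_incidenceSet (G : SimpleGraph V) (v : V) :
    degN G v = (G.incidenceSet v).ncard := by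
  classical
  rw [degN, ← Nat.card_coe_set_eq, ← Nat.card_coe_set_eq]
  exact (Nat.card_congr (G.incidenceSetEquivNeighborSet v)).symm

theorem degN_deleteEdges_add [Finite V] (G : SimpleGraph V) (F : Set (Sym2 V)) (v : V) :
    degN (G.deleteEdges F) v + (G.incidenceSet v ∩ F).ncard = degN G v := by
  have hinc : (G.deleteEdges F).incidenceSet v = G.incidenceSet v \ F := by
    ext e
    simp only [incidenceSet, edgeSet_deleteEdges, Set.mem_ofPred_eq, Set.mem_sdiff]
    tauto
  rw [degN_eq_ncard_incidenceSet, degN_eq_ncard_incidenceSet, hinc, add_comm,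
    Set.ncard_inter_add_ncard_sdiff_eq_ncard]

theorem degN_lt_ncard_supp [Finite V] (G : SimpleGraph V) (v : V) :
    degN G v < (G.connectedComponentMk v).supp.ncard := by
  have hsub : insert v (G.neighborSet v) ⊆ (G.connectedComponentMk v).supp := by
    rintro w (rfl | hw)
    · rfl
    · exact ((G.connectedComponentMk v).mem_supp_congr_adj hw).1 rfl
  have := Set.ncard_le_ncard hsub
  rwa [Set.ncard_insert_of_notMem G.notMem_neighborSet_self] at this

theorem minDeg_le (G : SimpleGraph V) (v : V) : minDeg G ≤ degN G v := Nat.sInf_le ⟨v, rfl⟩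

theorem dOut_pair [Finite V] (h : G.Adj x y) : dOut G {x, y} = degN G x + degN G y - 2 := by
  have hb : edgeBoundary G {x, y} = (G.incidenceSet x ∪ G.incidenceSet y) \ {s(x, y)} := by
    ext e
    induction e using Sym2.ind with | _ a b =>
    simp only [mk_mem_edgeBoundary_iff, Set.mem_sdiff, Set.mem_union, mk'_mem_incidenceSet_iff,
      Set.mem_singleton_iff, Sym2.eq_iff, Set.mem_insert_iff]
    have hxy := G.ne_of_adj h
    constructor
    · rintro ⟨hab, hne⟩
      have hab' := G.ne_of_adj hab
      tauto
    · rintro ⟨hab | hab, hne⟩ <;> have hab' := G.ne_of_adj hab.1 <;> grind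
  have hxy : s(x, y) ∈ G.incidenceSet x ∪ G.incidenceSet y :=
    .inl ((G.mk'_mem_incidenceSet_left_iff).2 h)
  have hunion := Set.ncard_union_add_ncard_inter (G.incidenceSet x) (G.incidenceSet y)
  rw [G.incidenceSet_inter_incidenceSet_of_adj h, Set.ncard_singleton] at hunion
  rw [dOut_eq_ncard_edgeBoundary, hb, Set.ncard_sdiff_singleton_of_mem hxy,
    degN_eq_ncard_incidenceSet, degN_eq_ncard_incidenceSet]
  omega

end Boundary

section Cuts

variable {G : SimpleGraph V} {F : Set (Sym2 V)} {h : ℕ} {x y : V}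

theorem xiH_one_le_dOut (hxy : G.Adj x y) : xiH G 1 ≤ dOut G {x, y} :=
  Nat.sInf_le ⟨{x, y}, Set.ncard_pair hxy.ne, induce_pair_connected_of_adj hxy, rfl⟩

theorem exists_adj_dOut_eq_xiH_one {a b : V} (hab : G.Adj a b) :
    ∃ x y, G.Adj x y ∧ dOut G {x, y} = xiH G 1 := by
  obtain ⟨X, hX, hconn, hd⟩ := Nat.sInf_mem
    (⟨_, {a, b}, Set.ncard_pair hab.ne, induce_pair_connected_of_adj hab, rfl⟩ :
      {k | ∃ X : Set V, X.ncard = 1 + 1 ∧ (G.induce X).Connected ∧ dOut G X = k}.Nonempty)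
  obtain ⟨x, y, hne, rfl⟩ := Set.ncard_eq_two.1 hX
  exact ⟨x, y, adj_of_connected_induce_pair hne hconn, hd⟩

theorem xiH_le_ncard_of_supp_ncard_eq [Finite V] (c : (G.deleteEdges F).ConnectedComponent)
    (hc : c.supp.ncard = h + 1) : xiH G h ≤ F.ncard :=
  calc xiH G h ≤ dOut G c.supp :=
        Nat.sInf_le ⟨c.supp, hc,
          c.maximal_connected_induce_supp.prop.mono
            (show (G.deleteEdges F).induce c.supp ≤ G.induce c.supp from
              fun _ _ hab => (deleteEdges_adj.1 hab).1), rfl⟩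
    _ ≤ F.ncard := Set.ncard_le_ncard (edgeBoundary_supp_subset c)

theorem lambdaH_le_ncard (hF : IsExtraEdgeCut G h F) : lambdaH G h ≤ F.ncard :=
  Nat.sInf_le ⟨F, hF, rfl⟩

theorem exists_isExtraEdgeCut_ncard_eq_lambdaH (hG : LambdaConn G h) :
    ∃ F, IsExtraEdgeCut G h F ∧ F.ncard = lambdaH G h := by
  obtain ⟨F, hF⟩ := hG
  exact Nat.sInf_mem
    (⟨_, F, hF, rfl⟩ : {k | ∃ F, IsExtraEdgeCut G h F ∧ F.ncard = k}.Nonempty)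

theorem superLambda_of_forall_isExtraEdgeCut_le_xiH [Finite V] (hconn : G.Connected)
    (hex : ∃ F, IsExtraEdgeCut G h F ∧ F.ncard ≤ xiH G h)
    (hsmall : ∀ F, IsExtraEdgeCut G h F → F.ncard ≤ xiH G h →
      ∃ c : (G.deleteEdges F).ConnectedComponent, c.supp.ncard = h + 1) :
    SuperLambda G h := by
  obtain ⟨F₀, hF₀, hle⟩ := hex
  have hlam : lambdaH G h ≤ xiH G h := (lambdaH_le_ncard hF₀).trans hle
  obtain ⟨F, hF, hFcard⟩ := exists_isExtraEdgeCut_ncard_eq_lambdaH ⟨F₀, hF₀⟩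
  obtain ⟨c, hc⟩ := hsmall F hF (hFcard ▸ hlam)
  have hopt : lambdaH G h = xiH G h :=
    le_antisymm hlam (hFcard ▸ xiH_le_ncard_of_supp_ncard_eq c hc)
  exact ⟨hconn, ⟨F₀, hF₀⟩, hopt, fun F hF hFc => hsmall F hF (hFc.trans hopt).le⟩

theorem isExtraEdgeCut_one_edgeBoundary [Finite V] {A : Set V} {a b : V} (ha : a ∈ A) (hb : b ∉ A)
    (hA : ∀ v, ∃ w, G.Adj v w ∧ (v ∈ A ↔ w ∈ A)) : IsExtraEdgeCut G 1 (edgeBoundary G A) := by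
  refine ⟨edgeBoundary_subset_edgeSet, fun hconn => hb ?_, fun c => ?_⟩
  · exact ((hconn.preconnected a b).iff_of_forall_adj
      fun _ _ => mem_iff_of_deleteEdges_edgeBoundary_adj).1 ha
  · obtain ⟨v, rfl⟩ := c.exists_rep
    obtain ⟨w, hvw, hside⟩ := hA v
    have hadj : (G.deleteEdges (edgeBoundary G A)).Adj v w :=
      deleteEdges_adj.2 ⟨hvw, fun h => (mk_mem_edgeBoundary_iff.1 h).2 hside⟩
    exact (Set.one_lt_ncard_iff).2 ⟨v, w, rfl, (ConnectedComponent.mem_supp_congr_adj _ hadj).1 rfl,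
      hvw.ne⟩

end Cuts

section NonStar

variable {G : SimpleGraph V} {x y : V}

/-- The cut is `∂C` for the component `C` of `u` in `G - ∂X`: `C` avoids `X` and `∂C ⊆ ∂X`. -/
theorem exists_isExtraEdgeCut_one_le_dOut_of_adj_compl [Finite V] {X : Set V} {u v : V}
    (hiso : ∀ v, ∃ w, G.Adj v w) (hX : ∀ a ∈ X, ∃ b ∈ X, G.Adj a b) (hx : x ∈ X)
    (hu : u ∉ X) (hv : v ∉ X) (huv : G.Adj u v) :
    ∃ F, IsExtraEdgeCut G 1 F ∧ F.ncard ≤ dOut G X := by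
  set K := G.deleteEdges (edgeBoundary G X)
  set C := (K.connectedComponentMk u).supp
  have hKadj : ∀ {a b}, G.Adj a b → a ∉ X → b ∉ X → K.Adj a b := fun hab ha hb =>
    deleteEdges_adj.2 ⟨hab, fun h => (mk_mem_edgeBoundary_iff.1 h).2 (by tauto)⟩
  have hCX : ∀ w ∈ C, w ∉ X := fun w hw hwX =>
    hu (((ConnectedComponent.exact hw).iff_of_forall_adj
      fun _ _ => mem_iff_of_deleteEdges_edgeBoundary_adj).1 hwX)
  have hvC : v ∈ C := (ConnectedComponent.mem_supp_congr_adj _ (hKadj huv hu hv)).1 rfl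
  refine ⟨edgeBoundary G C, isExtraEdgeCut_one_edgeBoundary (a := u) (b := x) rfl
    (fun h => hCX x h hx) fun w => ?_, Set.ncard_le_ncard (edgeBoundary_supp_subset _)⟩
  by_cases hw : w ∈ C
  · obtain ⟨z, hzC, hzw⟩ : ∃ z ∈ C, z ≠ w := by
      by_cases hwu : w = u
      · exact ⟨v, hvC, hwu ▸ huv.ne'⟩
      · exact ⟨u, rfl, Ne.symm hwu⟩
    obtain ⟨z', hwz'⟩ := (ConnectedComponent.exact (hw.trans hzC.symm)).exists_adj_of_ne hzw.symm
    exact ⟨z', (deleteEdges_adj.1 hwz').1,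
      iff_of_true hw ((ConnectedComponent.mem_supp_congr_adj _ hwz').1 hw)⟩
  · by_cases hwX : w ∈ X
    · obtain ⟨b, hb, hwb⟩ := hX w hwX
      exact ⟨b, hwb, iff_of_false hw fun hbC => hCX b hbC hb⟩
    · obtain ⟨b, hwb⟩ := hiso w
      refine ⟨b, hwb, iff_of_false hw fun hbC => ?_⟩
      by_cases hbX : b ∈ X
      · exact hCX b hbC hbX
      · exact hw ((ConnectedComponent.mem_supp_congr_adj _ (hKadj hwb hwX hbX)).2 hbC)

theorem edgeSet_subset_insert_edgeBoundary
    (hind : ∀ u v, u ∉ ({x, y} : Set V) → v ∉ ({x, y} : Set V) → ¬G.Adj u v) :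
    G.edgeSet ⊆ insert s(x, y) (edgeBoundary G {x, y}) := by
  intro e he
  induction e using Sym2.ind with | _ a b =>
  rw [mem_edgeSet] at he
  rw [Set.mem_insert_iff, mk_mem_edgeBoundary_iff, Sym2.eq_iff]
  have hab := hind a b
  have hne := G.ne_of_adj he
  simp only [Set.mem_insert_iff, Set.mem_singleton_iff] at *
  grind

/-- The cut `∂A` for `A = {x} ∪ S` trades the edges `xs` (`s ∈ S`) of `∂{x, y}` for the single
edge `xy`. -/
theorem exists_isExtraEdgeCut_one_le_dOut_of_split [Finite V] {S : Set V} {s t : V}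
    (hxy : G.Adj x y)
    (hind : ∀ u v, u ∉ ({x, y} : Set V) → v ∉ ({x, y} : Set V) → ¬G.Adj u v)
    (hS : ∀ v ∈ S, v ∉ ({x, y} : Set V) ∧ G.Adj x v)
    (hSc : ∀ v ∉ S, v ∉ ({x, y} : Set V) → G.Adj y v)
    (hs : s ∈ S) (ht : t ∉ S) (htX : t ∉ ({x, y} : Set V)) :
    ∃ F, IsExtraEdgeCut G 1 F ∧ F.ncard ≤ dOut G {x, y} := by
  have hyS : y ∉ S := fun hy => (hS y hy).1 (by simp)
  have hyA : y ∉ insert x S := by simp [hxy.ne', hyS]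
  refine ⟨edgeBoundary G (insert x S),
    isExtraEdgeCut_one_edgeBoundary (Set.mem_insert x S) hyA fun v => ?_, ?_⟩
  · by_cases hvx : v = x
    · subst hvx
      exact ⟨s, (hS s hs).2, by simp [hs]⟩
    by_cases hvS : v ∈ S
    · exact ⟨x, (hS v hvS).2.symm, by simp [hvS]⟩
    have hvA : v ∉ insert x S := by simp [hvx, hvS]
    by_cases hvy : v = y
    · subst hvy
      exact ⟨t, hSc t ht htX, iff_of_false hvA (by simp_all)⟩
    · exact ⟨y, (hSc v hvS (by simp [hvx, hvy])).symm, iff_of_false hvA hyA⟩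
  · have hxs : s(x, s) ∈ edgeBoundary G {x, y} :=
      mk_mem_edgeBoundary_iff.2 ⟨(hS s hs).2, fun h => (hS s hs).1 (h.1 (by simp))⟩
    have hxs' : s(x, s) ∉ edgeBoundary G (insert x S) := fun h =>
      (mk_mem_edgeBoundary_iff.1 h).2 (iff_of_true (Set.mem_insert x S) (.inr hs))
    have hxy' : s(x, y) ∉ edgeBoundary G {x, y} := fun h =>
      (mk_mem_edgeBoundary_iff.1 h).2 (by simp)
    have hsub : insert s(x, s) (edgeBoundary G (insert x S)) ⊆
        insert s(x, y) (edgeBoundary G {x, y}) :=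
      Set.insert_subset (.inr hxs)
        (edgeBoundary_subset_edgeSet.trans (edgeSet_subset_insert_edgeBoundary hind))
    have := Set.ncard_le_ncard hsub
    rw [Set.ncard_insert_of_notMem hxs', Set.ncard_insert_of_notMem hxy'] at this
    rw [dOut_eq_ncard_edgeBoundary]
    omega

theorem exists_adj_compl_pair_of_forall_not_adj
    (hind : ∀ u v, u ∉ ({x, y} : Set V) → v ∉ ({x, y} : Set V) → ¬G.Adj u v)
    (hstar : ∃ u v, u ≠ y ∧ v ≠ y ∧ G.Adj u v) : ∃ p ∉ ({x, y} : Set V), G.Adj x p := by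
  obtain ⟨u, v, hu, hv, huv⟩ := hstar
  have hind' := hind u v
  have hne := G.ne_of_adj huv
  by_cases hux : u = x
  · subst hux
    exact ⟨v, by simp [hne.symm, hv], huv⟩
  · have hvx : v = x := by simp_all
    subst hvx
    exact ⟨u, by simp [hux, hu], huv.symm⟩

theorem exists_isExtraEdgeCut_one_le_dOut_of_forall_not_adj [Finite V]
    (hiso : ∀ v, ∃ w, G.Adj v w) (hstar : ∀ c, ∃ u v, u ≠ c ∧ v ≠ c ∧ G.Adj u v)
    (hcard : 4 ≤ Nat.card V) (hxy : G.Adj x y)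
    (hind : ∀ u v, u ∉ ({x, y} : Set V) → v ∉ ({x, y} : Set V) → ¬G.Adj u v) :
    ∃ F, IsExtraEdgeCut G 1 F ∧ F.ncard ≤ dOut G {x, y} := by
  obtain ⟨p, hp, hxp⟩ := exists_adj_compl_pair_of_forall_not_adj hind (hstar y)
  by_cases hall : ∀ t ∉ ({x, y} : Set V), G.Adj y t
  · obtain ⟨t, ht⟩ : ∃ t, t ∉ ({x, y, p} : Set V) := by
      refine (Set.ne_univ_iff_exists_notMem _).1 fun h => ?_
      have := Set.ncard_insert_le x {y, p}
      have := Set.ncard_insert_le y {p}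
      rw [h, Set.ncard_univ, Set.ncard_singleton] at *
      omega
    simp only [Set.mem_insert_iff, Set.mem_singleton_iff, not_or] at ht
    exact exists_isExtraEdgeCut_one_le_dOut_of_split (S := {p}) hxy hind
      (by rintro v rfl; exact ⟨hp, hxp⟩) (fun v _ hv => hall v hv) rfl (by simpa using ht.2.2)
      (by simp [ht.1, ht.2.1])
  · push Not at hall
    obtain ⟨r, hr, hyr⟩ := hall
    obtain ⟨q, hq, hyq⟩ := exists_adj_compl_pair_of_forall_not_adj (x := y) (y := x)
      (by simpa only [Set.pair_comm] using hind) (hstar x)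
    rw [Set.pair_comm] at hq
    refine exists_isExtraEdgeCut_one_le_dOut_of_split
      (S := {v | v ∉ ({x, y} : Set V) ∧ ¬G.Adj y v}) hxy hind ?_ ?_ ⟨hr, hyr⟩
      (fun h => h.2 hyq) hq
    · rintro v ⟨hv, hyv⟩
      obtain ⟨w, hvw⟩ := hiso v
      have hw : w ∈ ({x, y} : Set V) := by_contra fun hw => hind v w hv hw hvw
      rcases hw with rfl | rfl
      · exact ⟨hv, hvw.symm⟩
      · exact absurd hvw.symm hyv
    · intro v hvS hv
      by_contra hyv
      exact hvS ⟨hv, hyv⟩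

/-- The classical bound `λ' ≤ ξ` for graphs that are not stars (`hstar`). -/
theorem exists_isExtraEdgeCut_one_le_xiH [Finite V] (hiso : ∀ v, ∃ w, G.Adj v w)
    (hstar : ∀ c, ∃ u v, u ≠ c ∧ v ≠ c ∧ G.Adj u v) (hcard : 4 ≤ Nat.card V) :
    ∃ F, IsExtraEdgeCut G 1 F ∧ F.ncard ≤ xiH G 1 := by
  obtain ⟨a⟩ : Nonempty V := (Nat.card_pos_iff.1 (by omega)).1
  obtain ⟨b, hab⟩ := hiso a
  obtain ⟨x, y, hxy, hX⟩ := exists_adj_dOut_eq_xiH_one hab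
  rw [← hX]
  by_cases hout : ∃ u v, u ∉ ({x, y} : Set V) ∧ v ∉ ({x, y} : Set V) ∧ G.Adj u v
  · obtain ⟨u, v, hu, hv, huv⟩ := hout
    refine exists_isExtraEdgeCut_one_le_dOut_of_adj_compl hiso ?_ (Set.mem_insert x {y}) hu hv huv
    rintro a (rfl | rfl)
    · exact ⟨y, by simp, hxy⟩
    · exact ⟨x, by simp, hxy.symm⟩
  · push Not at hout
    exact exists_isExtraEdgeCut_one_le_dOut_of_forall_not_adj hiso hstar hcard hxy hout

end NonStar

section Deletion

variable {G : SimpleGraph V} {F : Set (Sym2 V)}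

theorem exists_adj_deleteEdges [Finite V] {v : V} (hdeg : F.ncard < degN G v) :
    ∃ w, (G.deleteEdges F).Adj v w := by
  have hsplit := degN_deleteEdges_add G F v
  have hF := Set.ncard_le_ncard (Set.inter_subset_right (s := G.incidenceSet v) (t := F))
  exact Set.nonempty_of_ncard_ne_zero (s := (G.deleteEdges F).neighborSet v) (by
    change degN (G.deleteEdges F) v ≠ 0
    omega)

theorem deleteEdges_connected [Finite V] (hFE : F ⊆ G.edgeSet) (hdeg : ∀ v, F.ncard < degN G v)
    (hlt : F.ncard < lambdaH G 1) : (G.deleteEdges F).Connected := by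
  by_contra hnc
  by_cases hbig : ∀ c : (G.deleteEdges F).ConnectedComponent, 1 < c.supp.ncard
  · exact (lambdaH_le_ncard ⟨hFE, hnc, hbig⟩).not_gt hlt
  · push Not at hbig
    obtain ⟨c, hc⟩ := hbig
    revert hc
    refine c.ind fun v hc => ?_
    have hsupp := degN_lt_ncard_supp (G.deleteEdges F) v
    have hsplit := degN_deleteEdges_add G F v
    have hF := Set.ncard_le_ncard (Set.inter_subset_right (s := G.incidenceSet v) (t := F))
    have := hdeg v
    omega

theorem mem_of_degN_deleteEdges_le_one [Finite V] {v : V} (hdeg : F.ncard < degN G v)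
    (hle : degN (G.deleteEdges F) v ≤ 1) {e : Sym2 V} (he : e ∈ F) : v ∈ e := by
  have hsplit := degN_deleteEdges_add G F v
  have hinter : G.incidenceSet v ∩ F = F :=
    Set.eq_of_subset_of_ncard_le Set.inter_subset_right (by omega)
  rw [← hinter] at he
  exact he.1.2

/-- `G - F` is not a star: otherwise every vertex other than the centre would lie on every edge
of `F`. -/
theorem exists_adj_deleteEdges_avoiding [Finite V] (hFne : F.Nonempty)
    (hdeg : ∀ v, F.ncard < degN G v) (hcard : 4 ≤ Nat.card V) (c : V) :
    ∃ u v, u ≠ c ∧ v ≠ c ∧ (G.deleteEdges F).Adj u v := by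
  by_contra! hc
  have hle : ∀ v, v ≠ c → degN (G.deleteEdges F) v ≤ 1 := fun v hv => by
    have hsub : (G.deleteEdges F).neighborSet v ⊆ {c} := fun w hw => by
      by_contra hwc
      exact hc v w hv hwc hw
    have := Set.ncard_le_ncard hsub
    rwa [Set.ncard_singleton] at this
  obtain ⟨e, he⟩ := hFne
  have hmem := fun v (hv : v ≠ c) => mem_of_degN_deleteEdges_le_one (hdeg v) (hle v hv) he
  have hthree : 2 < ({c}ᶜ : Set V).ncard := by
    have := Set.ncard_add_ncard_compl {c}
    rw [Set.ncard_singleton] at this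
    omega
  obtain ⟨a, b, d, ha, hb, hd, hab, had, hbd⟩ := (Set.two_lt_ncard_iff).1 hthree
  induction e using Sym2.ind with | _ p q =>
  have := hmem a ha
  have := hmem b hb
  have := hmem d hd
  simp only [Sym2.mem_iff] at *
  grind

theorem xiH_deleteEdges_lt [Finite V] (hFE : F ⊆ G.edgeSet) (hFne : F.Nonempty)
    (hiso : ∀ v, ∃ w, (G.deleteEdges F).Adj v w)
    (hereg : ∀ x y, G.Adj x y → degN G x + degN G y - 2 = xiEdge G) :
    xiH (G.deleteEdges F) 1 < xiEdge G := by
  obtain ⟨e, he⟩ := hFne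
  induction e using Sym2.ind with | _ u v =>
  obtain ⟨w, huw⟩ := hiso u
  have huw' := (deleteEdges_adj.1 huw).1
  have hmem : s(u, v) ∈ edgeBoundary G {u, w} := by
    refine mk_mem_edgeBoundary_iff.2 ⟨hFE he, fun h => ?_⟩
    rcases h.1 (by simp) with rfl | rfl
    · exact G.loopless.irrefl _ (hFE he)
    · exact (deleteEdges_adj.1 huw).2 he
  calc xiH (G.deleteEdges F) 1 ≤ dOut (G.deleteEdges F) {u, w} := xiH_one_le_dOut huw
    _ < dOut G {u, w} := dOut_deleteEdges_lt he hmem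
    _ = xiEdge G := (dOut_pair huw').trans (hereg u w huw')

theorem exists_ncard_supp_eq_of_add_lt_lambdaH {F' : Set (Sym2 V)} {h : ℕ}
    (hFE : F ⊆ G.edgeSet) (hF' : IsExtraEdgeCut (G.deleteEdges F) h F')
    (hlt : F.ncard + F'.ncard < lambdaH G (h + 1)) :
    ∃ c : ((G.deleteEdges F).deleteEdges F').ConnectedComponent, c.supp.ncard = h + 1 := by
  obtain ⟨hF'E, hnc, hcomp⟩ := hF'
  by_contra! hne
  have hcut : IsExtraEdgeCut G (h + 1) (F ∪ F') := by
    refine ⟨Set.union_subset hFE (hF'E.trans (by simp)), ?_⟩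
    rw [← deleteEdges_deleteEdges]
    exact ⟨hnc, fun c => Nat.lt_of_le_of_ne (hcomp c) (hne c).symm⟩
  have := lambdaH_le_ncard hcut
  have := Set.ncard_union_le F F'
  omega

theorem superLambda_deleteEdges [Finite V] (hopt : lambdaH G 1 = xiH G 1)
    (hereg : ∀ x y, G.Adj x y → degN G x + degN G y - 2 = xiEdge G)
    (hcard : 4 ≤ Nat.card V) (hFE : F ⊆ G.edgeSet) (hFne : F.Nonempty)
    (hlam : F.ncard + xiEdge G ≤ lambdaH G 2) (hdelta : F.ncard < minDeg G) :
    SuperLambda (G.deleteEdges F) 1 := by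
  have hdeg : ∀ v, F.ncard < degN G v := fun v => hdelta.trans_le (minDeg_le G v)
  have hiso : ∀ v, ∃ w, (G.deleteEdges F).Adj v w := fun v => exists_adj_deleteEdges (hdeg v)
  have hxi : F.ncard < xiH G 1 := by
    obtain ⟨e, he⟩ := hFne
    induction e using Sym2.ind with | _ a b =>
    obtain ⟨x, y, hxy, hX⟩ := exists_adj_dOut_eq_xiH_one (hFE he)
    have := dOut_pair hxy
    have := hdeg x
    have := hdeg y
    have := (Set.ncard_pos).2 ⟨_, he⟩
    omega
  have hxi' := xiH_deleteEdges_lt hFE hFne hiso hereg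
  refine superLambda_of_forall_isExtraEdgeCut_le_xiH (deleteEdges_connected hFE hdeg (hopt ▸ hxi))
    (exists_isExtraEdgeCut_one_le_xiH hiso (exists_adj_deleteEdges_avoiding hFne hdeg hcard) hcard)
    fun F' hF' hle => exists_ncard_supp_eq_of_add_lt_lambdaH hFE hF' ?_
  show F.ncard + F'.ncard < lambdaH G 2
  omega

end Deletion

section Persistence

variable {G : SimpleGraph V}

theorem two_mul_succ_le_card_of_lambdaConn [Finite V] [Nonempty V] {h : ℕ} (hG : LambdaConn G h) :
    2 * (h + 1) ≤ Nat.card V := by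
  obtain ⟨F, -, hnc, hcomp⟩ := hG
  obtain ⟨v, w, hvw⟩ : ∃ v w, ¬(G.deleteEdges F).Reachable v w := by
    by_contra! hr
    exact hnc ⟨hr⟩
  set c := (G.deleteEdges F).connectedComponentMk v
  set d := (G.deleteEdges F).connectedComponentMk w
  have hdisj : Disjoint c.supp d.supp := Set.disjoint_left.2 fun u hu hu' =>
    hvw (ConnectedComponent.exact (hu.symm.trans hu'))
  have hunion := Set.ncard_union_eq hdisj
  have huniv := Set.ncard_le_ncard (Set.subset_univ (c.supp ∪ d.supp))
  rw [Set.ncard_univ] at huniv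
  have := hcomp c
  have := hcomp d
  omega

theorem not_superLambda_bot {h : ℕ} : ¬SuperLambda (⊥ : SimpleGraph V) h := by
  rintro ⟨hconn, ⟨F, hFE, hnc, -⟩, -⟩
  rw [edgeSet_bot, Set.subset_empty_iff] at hFE
  rw [hFE, deleteEdges_empty] at hnc
  exact hnc hconn

theorem le_rhoH {m h : ℕ}
    (hm : ∀ F, F ⊆ G.edgeSet → F.ncard ≤ m → SuperLambda (G.deleteEdges F) h) :
    m ≤ rhoH G h := by
  refine le_csSup ⟨G.edgeSet.ncard, fun k hk => ?_⟩ hm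
  by_contra! hlt
  exact not_superLambda_bot (by simpa using hk G.edgeSet subset_rfl hlt.le)

end Persistence

/-- If `G` is `λ''`-connected, super-`λ'` and edge-regular, then
`ρ'(G) ≥ min {λ''(G) - ξ(G), δ(G) - 1}`. -/
theorem stmt6 {V : Type*} [Fintype V] (G : SimpleGraph V)
    (hl2 : LambdaConn G 2) (hs : SuperLambda G 1)
    (hereg : ∀ x y, G.Adj x y → degN G x + degN G y - 2 = xiEdge G) :
    min (lambdaH G 2 - xiEdge G) (minDeg G - 1) ≤ rhoH G 1 := by
  have : Nonempty V := hs.1.nonempty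
  have hcard := two_mul_succ_le_card_of_lambdaConn hl2
  refine le_rhoH fun F hFE hFm => ?_
  rcases F.eq_empty_or_nonempty with rfl | hFne
  · rwa [deleteEdges_empty]
  have := (Set.ncard_pos).2 hFne
  exact superLambda_deleteEdges hs.2.2.1 hereg (by omega) hFE hFne (by omega) (by omega)
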